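/- arXiv:2604.10820 — 7 statements merged into one kernel-verified Lean document; each statement's English description precedes it below -/
import Mathlib

section
/- (Poincaré separation / Cauchy interlacing for compressions) Let T be an n×n real symmetric matrix with eigenvalues λ₁ ≥ λ₂ ≥ ⋯ ≥ λₙ (listed with multiplicity in decreasing order), let k ≤ n, and let U be an n×k real matrix with UᵀU = I_k. If μ₁ ≥ μ₂ ≥ ⋯ ≥ μ_k are the eigenvalues of the k×k real symmetric matrix UᵀTU listed with multiplicity in decreasing order, then μ_j ≤ λ_j for every j = 1, …, k. -/
/-!
Half of the Courant–Fischer principle: if `⟪T x, x⟫ ≥ c ‖x‖²` on a subspace of dimension `j + 1`,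
that subspace meets the span of the eigenvectors of index `≥ j` (dimension `n - j`), on which
`⟪T x, x⟫ ≤ λⱼ ‖x‖²`; hence `c ≤ λⱼ`. Apply this to the image under the isometry `U` of the
span of the top `j + 1` eigenvectors of `UᵀTU`, where `⟪T U y, U y⟫ = ⟪UᵀTU y, y⟫ ≥ μⱼ ‖U y‖²`.
Since a factorisation `∏ (X - C aᵢ)` with `a` antitone determines `a`, `lam` and `mu` are the
sorted eigenvalues of `T` and `UᵀTU`.
-/

open Matrix Polynomial Module RCLike InnerProductSpace

namespace OrthonormalBasis

variable {ι 𝕜 E : Type*} [Fintype ι] [RCLike 𝕜] [NormedAddCommGroup E] [InnerProductSpace 𝕜 E]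

theorem finrank_span_image (b : OrthonormalBasis ι 𝕜 E) (s : Finset ι) :
    finrank 𝕜 (Submodule.span 𝕜 (b '' s)) = s.card := by
  rw [Set.image_eq_range]
  exact (finrank_span_eq_card
    (b.orthonormal.linearIndependent.comp _ Subtype.val_injective)).trans (by simp)

theorem inner_eq_zero_of_mem_span_image (b : OrthonormalBasis ι 𝕜 E) {s : Set ι} {x : E}
    (hx : x ∈ Submodule.span 𝕜 (b '' s)) {i : ι} (hi : i ∉ s) : ⟪b i, x⟫_𝕜 = 0 := by
  rw [← Submodule.mem_orthogonal_singleton_iff_inner_right]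
  refine Submodule.span_le.mpr ?_ hx
  rintro _ ⟨i', hi', rfl⟩
  have hii' : i ≠ i' := fun h => hi (h ▸ hi')
  exact Submodule.mem_orthogonal_singleton_iff_inner_right.mpr (b.orthonormal.2 hii')

end OrthonormalBasis

namespace LinearMap.IsSymmetric

variable {𝕜 E F : Type*} [RCLike 𝕜] [NormedAddCommGroup E] [InnerProductSpace 𝕜 E]
  [FiniteDimensional 𝕜 E] [NormedAddCommGroup F] [InnerProductSpace 𝕜 F] [FiniteDimensional 𝕜 F]
  {T : E →ₗ[𝕜] E} {n : ℕ}

theorem eigenvalues_eq_of_charpoly_eq (hT : T.IsSymmetric) (hn : finrank 𝕜 E = n)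
    {lam : Fin n → ℝ} (hlam : Antitone lam) (h : T.charpoly = ∏ i, (X - C (lam i : 𝕜))) :
    hT.eigenvalues hn = lam := by
  rw [← List.ofFn_inj, ← hT.sort_roots_charpoly_eq_eigenvalues hn, h, roots_prod _ _ (by
      simp [Finset.prod_ne_zero_iff, X_sub_C_ne_zero])]
  simp only [roots_X_sub_C, Multiset.bind_singleton, Fin.univ_val_map, Multiset.map_coe,
    List.map_ofFn, Function.comp_def, ofReal_re, ge_iff_le, Multiset.coe_sort]
  exact List.mergeSort_of_pairwise (by simpa using fun i j (hij : i < j) => hlam hij.le)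

theorem re_inner_apply_self_eq_sum (hT : T.IsSymmetric) (hn : finrank 𝕜 E = n) (x : E) :
    re ⟪T x, x⟫_𝕜 = ∑ i, hT.eigenvalues hn i * ‖⟪hT.eigenvectorBasis hn i, x⟫_𝕜‖ ^ 2 := by
  simp_rw [← OrthonormalBasis.repr_apply_apply]
  rw [← (hT.eigenvectorBasis hn).repr.inner_map_map, PiLp.inner_apply, map_sum]
  refine Finset.sum_congr rfl fun i _ => ?_
  rw [hT.eigenvectorBasis_apply_self_apply, ← smul_eq_mul, inner_smul_left, conj_ofReal,
    re_ofReal_mul, inner_self_eq_norm_sq]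

theorem re_inner_apply_self_le (hT : T.IsSymmetric) (hn : finrank 𝕜 E = n) (j : Fin n) {x : E}
    (hx : ∀ i < j, ⟪hT.eigenvectorBasis hn i, x⟫_𝕜 = 0) :
    re ⟪T x, x⟫_𝕜 ≤ hT.eigenvalues hn j * ‖x‖ ^ 2 := by
  rw [hT.re_inner_apply_self_eq_sum hn, ← (hT.eigenvectorBasis hn).sum_sq_norm_inner_right,
    Finset.mul_sum]
  refine Finset.sum_le_sum fun i _ => ?_
  rcases lt_or_ge i j with hij | hji
  · simp [hx i hij]
  · exact mul_le_mul_of_nonneg_right (hT.eigenvalues_antitone hn hji) (by positivity)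

theorem le_re_inner_apply_self (hT : T.IsSymmetric) (hn : finrank 𝕜 E = n) (j : Fin n) {x : E}
    (hx : ∀ i, j < i → ⟪hT.eigenvectorBasis hn i, x⟫_𝕜 = 0) :
    hT.eigenvalues hn j * ‖x‖ ^ 2 ≤ re ⟪T x, x⟫_𝕜 := by
  rw [hT.re_inner_apply_self_eq_sum hn, ← (hT.eigenvectorBasis hn).sum_sq_norm_inner_right,
    Finset.mul_sum]
  refine Finset.sum_le_sum fun i _ => ?_
  rcases lt_or_ge j i with hji | hij
  · simp [hx i hji]
  · exact mul_le_mul_of_nonneg_right (hT.eigenvalues_antitone hn hij) (by positivity)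

theorem le_eigenvalues_of_le_re_inner (hT : T.IsSymmetric) (hn : finrank 𝕜 E = n) (j : Fin n)
    {S : Submodule 𝕜 E} (hS : (j : ℕ) < finrank 𝕜 S) {c : ℝ}
    (hc : ∀ x ∈ S, c * ‖x‖ ^ 2 ≤ re ⟪T x, x⟫_𝕜) : c ≤ hT.eigenvalues hn j := by
  set b := hT.eigenvectorBasis hn
  set W := Submodule.span 𝕜 (b '' ↑(Finset.Ici j))
  have hW : finrank 𝕜 W = n - j := by simp [W, b.finrank_span_image]
  have hSW : ¬ Disjoint S W := fun h => by
    have := Submodule.finrank_add_finrank_le_of_disjoint h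
    omega
  obtain ⟨x, hxS, hxW, hx0⟩ : ∃ x ∈ S, x ∈ W ∧ x ≠ 0 := by
    simpa [Submodule.disjoint_def] using hSW
  have hupper := hT.re_inner_apply_self_le hn j fun i hi =>
    b.inner_eq_zero_of_mem_span_image hxW (by simpa using hi)
  exact le_of_mul_le_mul_right ((hc x hxS).trans hupper) (by positivity)

theorem eigenvalues_le_of_compression (hT : T.IsSymmetric) (hn : finrank 𝕜 E = n)
    {Q : F →ₗ[𝕜] F} (hQ : Q.IsSymmetric) {k : ℕ} (hk : finrank 𝕜 F = k) (V : F →ₗᵢ[𝕜] E)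
    (hQT : ∀ y, ⟪Q y, y⟫_𝕜 = ⟪T (V y), V y⟫_𝕜) (hkn : k ≤ n) (j : Fin k) :
    hQ.eigenvalues hk j ≤ hT.eigenvalues hn (Fin.castLE hkn j) := by
  set b := hQ.eigenvectorBasis hk
  set P := Submodule.span 𝕜 (b '' ↑(Finset.Iic j))
  refine hT.le_eigenvalues_of_le_re_inner hn _ (S := P.map V.toLinearMap) ?_ ?_
  · rw [← (Submodule.equivMapOfInjective _ V.injective P).finrank_eq, b.finrank_span_image]
    simp
  · rintro _ ⟨y, hyP, rfl⟩
    rw [LinearIsometry.coe_toLinearMap, V.norm_map, ← hQT]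
    exact hQ.le_re_inner_apply_self hk j fun i hi =>
      b.inner_eq_zero_of_mem_span_image hyP (by simpa using hi)

end LinearMap.IsSymmetric

namespace Matrix

variable {𝕜 m ι : Type*} [RCLike 𝕜] [Fintype m] [DecidableEq m] [Fintype ι] [DecidableEq ι]

theorem charpoly_toEuclideanLin (A : Matrix m m 𝕜) :
    (toEuclideanLin A).charpoly = A.charpoly := by
  rw [toEuclideanLin, toLpLin_eq_toLin, charpoly_toLin]

theorem inner_toEuclideanLin_conjTranspose_mul_mul (A : Matrix m m 𝕜) (U : Matrix m ι 𝕜)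
    (x y : EuclideanSpace 𝕜 ι) :
    ⟪toEuclideanLin (Uᴴ * A * U) x, y⟫_𝕜 =
      ⟪toEuclideanLin A (toEuclideanLin U x), toEuclideanLin U y⟫_𝕜 := by
  rw [toEuclideanLin, toLpLin_mul 2 2 2, toLpLin_mul 2 2 2, ← toEuclideanLin, ← toEuclideanLin,
    ← toEuclideanLin, toEuclideanLin_conjTranspose_eq_adjoint]
  simp [LinearMap.adjoint_inner_left]

theorem inner_toEuclideanLin_of_conjTranspose_mul_self {U : Matrix m ι 𝕜} (hU : Uᴴ * U = 1)
    (x y : EuclideanSpace 𝕜 ι) :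
    ⟪toEuclideanLin U x, toEuclideanLin U y⟫_𝕜 = ⟪x, y⟫_𝕜 := by
  simpa [hU] using (inner_toEuclideanLin_conjTranspose_mul_mul 1 U x y).symm

end Matrix

/-- Poincaré separation / Cauchy interlacing for compressions:
Let `T` be an `n × n` real symmetric matrix with eigenvalues `lam 0 ≥ ⋯ ≥ lam (n-1)`
listed with multiplicity in decreasing order (encoded by factorizing the characteristic
polynomial), let `k ≤ n`, and let `U` be `n × k` with `UᵀU = I_k`. If `mu 0 ≥ ⋯ ≥ mu (k-1)`
are the eigenvalues of `UᵀTU` listed with multiplicity in decreasing order, then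
`mu j ≤ lam j` for every `j`. -/
theorem poincare_separation
    (n k : ℕ) (hk : k ≤ n) (T : Matrix (Fin n) (Fin n) ℝ) (hsymm : T.IsSymm)
    (lam : Fin n → ℝ) (hlam : Antitone lam)
    (hcharT : T.charpoly = ∏ i, (X - C (lam i)))
    (U : Matrix (Fin n) (Fin k) ℝ) (hU : Uᵀ * U = 1)
    (mu : Fin k → ℝ) (hmu : Antitone mu)
    (hcharQ : (Uᵀ * T * U).charpoly = ∏ j, (X - C (mu j))) :
    ∀ j : Fin k, mu j ≤ lam (Fin.castLE hk j) := by
  intro j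
  have hUH : Uᴴ = Uᵀ := conjTranspose_eq_transpose_of_trivial U
  have hT : T.IsHermitian := isHermitian_iff_isSymm.mpr hsymm
  have hTs : (toEuclideanLin T).IsSymmetric := isSymmetric_toEuclideanLin_iff.mpr hT
  have hQs : (toEuclideanLin (Uᵀ * T * U)).IsSymmetric :=
    isSymmetric_toEuclideanLin_iff.mpr (hUH ▸ isHermitian_conjTranspose_mul_mul U hT)
  have hlam_eq := hTs.eigenvalues_eq_of_charpoly_eq finrank_euclideanSpace_fin hlam
    (by rwa [charpoly_toEuclideanLin])
  have hmu_eq := hQs.eigenvalues_eq_of_charpoly_eq finrank_euclideanSpace_fin hmu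
    (by rwa [charpoly_toEuclideanLin])
  let V := (toEuclideanLin U).isometryOfInner
    (inner_toEuclideanLin_of_conjTranspose_mul_self (hUH ▸ hU))
  have hQT (y : EuclideanSpace ℝ (Fin k)) :
      ⟪toEuclideanLin (Uᵀ * T * U) y, y⟫_ℝ = ⟪toEuclideanLin T (V y), V y⟫_ℝ :=
    hUH ▸ inner_toEuclideanLin_conjTranspose_mul_mul T U y y
  rw [← hlam_eq, ← hmu_eq]
  exact hTs.eigenvalues_le_of_compression _ hQs _ V hQT hk j
end

section
/- For the six-state model with parameters satisfying the row-sum constraints, the characteristic polynomial of P factors as charpoly(P) = charpoly(K) · (X − β₁)(X − β₂)(X − β₃), where K is the 3×3 quotient matrix with K_{ii} = a_i + b_i and K_{ij} = 2c_{ij} for i ≠ j, and β_r := a_r − b_r. Equivalently, the eigenvalue multiset of P is {1, κ₂, κ₃, β₁, β₂, β₃}, where 1, κ₂, κ₃ are the eigenvalues of K. -/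
open Matrix Polynomial

/-- The symmetric 6×6 transition matrix of the six-state model. -/
def sixStateP (a₁ a₂ a₃ b₁ b₂ b₃ c₁₂ c₁₃ c₂₃ : ℝ) : Matrix (Fin 6) (Fin 6) ℝ :=
  !![a₁,  b₁,  c₁₂, c₁₂, c₁₃, c₁₃;
     b₁,  a₁,  c₁₂, c₁₂, c₁₃, c₁₃;
     c₁₂, c₁₂, a₂,  b₂,  c₂₃, c₂₃;
     c₁₂, c₁₂, b₂,  a₂,  c₂₃, c₂₃;
     c₁₃, c₁₃, c₂₃, c₂₃, a₃,  b₃;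
     c₁₃, c₁₃, c₂₃, c₂₃, b₃,  a₃]

/-- The 3×3 quotient matrix `K` with `K_{ii} = a_i + b_i` and `K_{ij} = 2 c_{ij}`. -/
def quotientK (a₁ a₂ a₃ b₁ b₂ b₃ c₁₂ c₁₃ c₂₃ : ℝ) : Matrix (Fin 3) (Fin 3) ℝ :=
  !![a₁ + b₁, 2 * c₁₂, 2 * c₁₃;
     2 * c₁₂, a₂ + b₂, 2 * c₂₃;
     2 * c₁₃, 2 * c₂₃, a₃ + b₃]


/-! The reflection swapping the two states of each block commutes with `P`, so `P` splits into
its symmetric part, on which it acts as the lumped chain `K`, and its antisymmetric part, on which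
it acts diagonally by `βᵢ = aᵢ - bᵢ`. In block form, after listing first and second states of the
blocks separately, `P = [[A, B], [B, A]]` with `A + B = K` and `A - B = diag β`, and
`det [[A, B], [B, A]] = det (A + B) * det (A - B)` by the unimodular row and column operations
`R₁ += R₂`, `C₂ -= C₁`. -/

namespace Matrix

variable {n R : Type*} [Fintype n] [DecidableEq n] [CommRing R]

theorem det_fromBlocks_eq_det_add_mul_det_sub (A B : Matrix n n R) :
    (fromBlocks A B B A).det = (A + B).det * (A - B).det := by
  have h : fromBlocks 1 1 0 1 * fromBlocks A B B A * fromBlocks 1 (-1) 0 1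
      = fromBlocks (A + B) 0 B (A - B) := by
    simp only [fromBlocks_multiply]
    congr 1 <;> simp <;> abel
  simpa [det_fromBlocks_zero₂₁, det_fromBlocks_zero₁₂] using congrArg det h

theorem charpoly_fromBlocks_eq_charpoly_add_mul_charpoly_sub (A B : Matrix n n R) :
    (fromBlocks A B B A).charpoly = (A + B).charpoly * (A - B).charpoly := by
  rw [charpoly, charmatrix_fromBlocks, det_fromBlocks_eq_det_add_mul_det_sub, charpoly, charpoly]
  congr 2 <;> simp only [charmatrix, map_add, map_sub] <;> abel

end Matrix

/-- `inl i` and `inr i` are the first and second state of the block `Bᵢ₊₁`. -/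
def blockInterleave : Fin 3 ⊕ Fin 3 ≃ Fin 6 where
  toFun := Sum.elim ![0, 2, 4] ![1, 3, 5]
  invFun := ![.inl 0, .inr 0, .inl 1, .inr 1, .inl 2, .inr 2]
  left_inv := by decide
  right_inv := by decide

def sym3 (d₁ d₂ d₃ e₁₂ e₁₃ e₂₃ : ℝ) : Matrix (Fin 3) (Fin 3) ℝ :=
  !![d₁, e₁₂, e₁₃; e₁₂, d₂, e₂₃; e₁₃, e₂₃, d₃]

section

variable (a₁ a₂ a₃ b₁ b₂ b₃ c₁₂ c₁₃ c₂₃ : ℝ)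

theorem sixStateP_eq_reindex_fromBlocks :
    sixStateP a₁ a₂ a₃ b₁ b₂ b₃ c₁₂ c₁₃ c₂₃ =
      reindex blockInterleave blockInterleave
        (fromBlocks (sym3 a₁ a₂ a₃ c₁₂ c₁₃ c₂₃) (sym3 b₁ b₂ b₃ c₁₂ c₁₃ c₂₃)
          (sym3 b₁ b₂ b₃ c₁₂ c₁₃ c₂₃) (sym3 a₁ a₂ a₃ c₁₂ c₁₃ c₂₃)) := by
  ext i j
  fin_cases i <;> fin_cases j <;> rfl

theorem sym3_add_sym3 :
    sym3 a₁ a₂ a₃ c₁₂ c₁₃ c₂₃ + sym3 b₁ b₂ b₃ c₁₂ c₁₃ c₂₃ =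
      quotientK a₁ a₂ a₃ b₁ b₂ b₃ c₁₂ c₁₃ c₂₃ := by
  ext i j
  fin_cases i <;> fin_cases j <;> simp [sym3, quotientK, two_mul]

theorem sym3_sub_sym3 :
    sym3 a₁ a₂ a₃ c₁₂ c₁₃ c₂₃ - sym3 b₁ b₂ b₃ c₁₂ c₁₃ c₂₃ =
      diagonal ![a₁ - b₁, a₂ - b₂, a₃ - b₃] := by
  ext i j
  fin_cases i <;> fin_cases j <;> simp [sym3]

end

theorem sixState_charpoly_factorization_general
    (a₁ a₂ a₃ b₁ b₂ b₃ c₁₂ c₁₃ c₂₃ : ℝ) :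
    (sixStateP a₁ a₂ a₃ b₁ b₂ b₃ c₁₂ c₁₃ c₂₃).charpoly
      = (quotientK a₁ a₂ a₃ b₁ b₂ b₃ c₁₂ c₁₃ c₂₃).charpoly *
        ((X - C (a₁ - b₁)) * (X - C (a₂ - b₂)) * (X - C (a₃ - b₃))) := by
  rw [sixStateP_eq_reindex_fromBlocks, charpoly_reindex,
    charpoly_fromBlocks_eq_charpoly_add_mul_charpoly_sub, sym3_add_sym3, sym3_sub_sym3,
    charpoly_diagonal, Fin.prod_univ_three]
  rfl

/-- In the six-state model the characteristic polynomial of `P` factors as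
`charpoly(P) = charpoly(K) · (X - β₁)(X - β₂)(X - β₃)` with `β_r = a_r - b_r`; equivalently
the eigenvalue multiset of `P` is `{1, κ₂, κ₃, β₁, β₂, β₃}` where `1, κ₂, κ₃` are the
eigenvalues of `K`. -/
theorem sixState_charpoly_factorization
    (a₁ a₂ a₃ b₁ b₂ b₃ c₁₂ c₁₃ c₂₃ : ℝ)
    (ha₁ : 0 ≤ a₁) (ha₂ : 0 ≤ a₂) (ha₃ : 0 ≤ a₃)
    (hb₁ : 0 ≤ b₁) (hb₂ : 0 ≤ b₂) (hb₃ : 0 ≤ b₃)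
    (hc₁₂ : 0 ≤ c₁₂) (hc₁₃ : 0 ≤ c₁₃) (hc₂₃ : 0 ≤ c₂₃)
    (hrow₁ : a₁ + b₁ + 2 * c₁₂ + 2 * c₁₃ = 1)
    (hrow₂ : a₂ + b₂ + 2 * c₁₂ + 2 * c₂₃ = 1)
    (hrow₃ : a₃ + b₃ + 2 * c₁₃ + 2 * c₂₃ = 1) :
    (sixStateP a₁ a₂ a₃ b₁ b₂ b₃ c₁₂ c₁₃ c₂₃).charpoly
      = (quotientK a₁ a₂ a₃ b₁ b₂ b₃ c₁₂ c₁₃ c₂₃).charpoly *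
        ((X - C (a₁ - b₁)) * (X - C (a₂ - b₂)) * (X - C (a₃ - b₃))) :=
  sixState_charpoly_factorization_general a₁ a₂ a₃ b₁ b₂ b₃ c₁₂ c₁₃ c₂₃
end

section
/- Let K be a 3×3 real symmetric matrix with nonnegative entries and all row sums equal to 1, whose characteristic polynomial is (X−1)(X−κ₂)(X−κ₃) with κ₃² ≤ κ₂², and set L := K². Then for every index i ∈ {1,2,3}, κ₃² ≤ (3 L_{ii} − 1)/2 ≤ κ₂². -/
/-!
Since `K` fixes the constant vectors, `M := K - P`, with `P := J/3` the projection onto them,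
lives on their orthogonal complement `Q := 1 - P`, where it has eigenvalues `κ₂, κ₃`. To see this
without diagonalising, let `B := (K - κ₂)(K - κ₃) - (1 - κ₂)(1 - κ₃) P`. Cayley–Hamilton gives
`K B = B`, hence `B² = (1 - κ₂)(1 - κ₃) B`, and `tr B = 0` because the trace of `q(K)` is the sum
of `q` over the roots of the characteristic polynomial. A symmetric `B` with these properties
vanishes, so `M² = (κ₂ + κ₃) M - κ₂κ₃ Q`. Then `M² - κ₃² Q` and `κ₂² Q - M²` are symmetric and
equal to their own square divided by `κ₂² - κ₃² ≥ 0`, so their diagonals are nonnegative; since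
`K² = M² + P` and `Q i i = 2/3`, this is the claim.
-/

open Matrix Polynomial

section Algebra

variable {S R : Type*} [CommRing S] [Ring R] [Algebra S R]

theorem aeval_mul_eq_eval_one_smul {K v : R} (hKv : K * v = v) (q : S[X]) :
    aeval K q * v = q.eval 1 • v := by
  induction q using Polynomial.induction_on with
  | C a => simp [Algebra.smul_def]
  | add p q hp hq => simp [add_mul, hp, hq, add_smul]
  | monomial k a ih =>
    simp only [map_mul, map_pow, aeval_X, aeval_C, eval_mul, eval_C, eval_pow, eval_X, one_pow,
      mul_one] at ih ⊢
    rw [pow_succ, ← mul_assoc, mul_assoc _ K, hKv, ih]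

theorem mul_self_sub_eq_of_sub_mul_sub {K P : R} {a b : S} (hKP : K * P = P) (hPK : P * K = P)
    (hP : P * P = P) (h : (K - a • 1) * (K - b • 1) = ((1 - a) * (1 - b)) • P) :
    (K - P) * (K - P) = (a + b) • (K - P) - (a * b) • (1 - P) := by
  simp only [sub_mul, mul_sub, smul_mul_assoc, mul_smul_comm, one_mul, mul_one, hKP, hPK, hP]
    at h ⊢
  linear_combination (norm := module) h

theorem mul_self_sub_sq_smul_mul_self_eq_smul {M Q : R} {a b : S} (hMQ : M * Q = M)
    (hQM : Q * M = M) (hQ : Q * Q = Q) (hM : M * M = (a + b) • M - (a * b) • Q) :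
    (M * M - b ^ 2 • Q) * (M * M - b ^ 2 • Q) = (a ^ 2 - b ^ 2) • (M * M - b ^ 2 • Q) := by
  have hA : M * M - b ^ 2 • Q = (a + b) • (M - b • Q) := by
    rw [hM]; module
  have hN : (M - b • Q) * (M - b • Q) = (a - b) • (M - b • Q) := by
    simp only [sub_mul, mul_sub, smul_mul_assoc, mul_smul_comm, hMQ, hQM, hQ, hM]
    module
  rw [hA, smul_mul_smul_comm, hN, smul_smul]
  module

end Algebra

namespace Matrix

variable {n : Type*} [Fintype n]

theorem IsSymm.mul_eq_of_mul_eq {α : Type*} [CommSemiring α] {A B C : Matrix n n α}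
    (hA : A.IsSymm) (hB : B.IsSymm) (hC : C.IsSymm) (h : A * B = C) : B * A = C := by
  rw [← hA.eq, ← hB.eq, ← transpose_mul, h, hC.eq]

theorem IsSymm.eq_zero_of_mul_self_eq_smul {B : Matrix n n ℝ} (hB : B.IsSymm) {c : ℝ}
    (hBB : B * B = c • B) (htr : B.trace = 0) : B = 0 := by
  rw [← trace_conjTranspose_mul_self_eq_zero_iff, conjTranspose_eq_transpose_of_trivial, hB.eq,
    hBB, trace_smul, htr, smul_zero]

theorem IsSymm.diag_nonneg_of_mul_self_eq_smul {A : Matrix n n ℝ} (hA : A.IsSymm) {c : ℝ}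
    (hc : 0 ≤ c) (hAA : A * A = c • A) (i : n) : 0 ≤ A i i := by
  have hsq : A i i ^ 2 ≤ c * A i i := calc
    A i i ^ 2 ≤ ∑ j, A i j ^ 2 :=
      Finset.single_le_sum (fun j _ => sq_nonneg (A i j)) (Finset.mem_univ i)
    _ = (A * A) i i := by simp only [mul_apply, hA.apply, sq]
    _ = c * A i i := by rw [hAA, smul_apply, smul_eq_mul]
  nlinarith

section DecidableEq

variable [DecidableEq n]

theorem isSymm_aeval {A : Matrix n n ℝ} (hA : A.IsSymm) (q : ℝ[X]) : (aeval A q).IsSymm := by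
  have hA' : IsSelfAdjoint A := (isHermitian_iff_isSymm.mpr hA).isSelfAdjoint
  rw [← isHermitian_iff_isSymm, ← cfc_polynomial q A]
  exact (cfc_predicate (q.eval ·) A).isHermitian

theorem IsSymm.trace_aeval {A : Matrix n n ℝ} (hA : A.IsSymm) (q : ℝ[X]) :
    (aeval A q).trace = (A.charpoly.roots.map q.eval).sum := by
  have hA' : A.IsHermitian := isHermitian_iff_isSymm.mpr hA
  have hchar := hA'.charpoly_cfc_eq (q.eval ·)
  rw [cfc_polynomial q A hA'.isSelfAdjoint] at hchar
  rw [trace_eq_sum_roots_charpoly_of_splits, hchar, hA'.roots_charpoly_eq_eigenvalues,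
    roots_prod]
  · simp
  · simp [Finset.prod_ne_zero_iff, X_sub_C_ne_zero]
  · rw [hchar]; exact Splits.prod fun i _ => Splits.X_sub_C _

theorem IsSymm.aeval_eq_eval_one_smul {K P : Matrix n n ℝ} (hK : K.IsSymm) (hP : P.IsSymm)
    (hPP : P * P = P) (htrP : P.trace = 1) (hKP : K * P = P) {r : ℝ[X]}
    (hr : K.charpoly = (X - 1) * r) : aeval K r = r.eval 1 • P := by
  set B := aeval K r - r.eval 1 • P
  have hKB : K * B = B := by
    have hCH := aeval_self_charpoly K
    rw [hr, map_mul, map_sub, aeval_X, map_one, sub_mul, one_mul, sub_eq_zero] at hCH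
    simp only [B, mul_sub, mul_smul_comm, hCH, hKP]
  have hBP : B * P = 0 := by
    simp only [B, sub_mul, aeval_mul_eq_eval_one_smul hKP, smul_mul_assoc, hPP, sub_self]
  have hB : B.IsSymm := (isSymm_aeval hK r).sub (hP.smul _)
  have hPB : P * B = 0 := hB.mul_eq_of_mul_eq hP isSymm_zero hBP
  have hBB : B * B = r.eval 1 • B := by
    show (aeval K r - r.eval 1 • P) * B = _
    rw [sub_mul, aeval_mul_eq_eval_one_smul hKB, smul_mul_assoc, hPB, smul_zero, sub_zero]
  have htrB : B.trace = 0 := by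
    have hroots : K.charpoly.roots = 1 ::ₘ r.roots := by
      rw [hr, roots_mul (hr ▸ K.charpoly_monic.ne_zero), ← C_1, roots_X_sub_C,
        Multiset.singleton_add]
    have hvanish : (r.roots.map r.eval).sum = 0 :=
      Multiset.sum_eq_zero fun x hx => by
        obtain ⟨y, hy, rfl⟩ := Multiset.mem_map.mp hx
        exact (isRoot_of_mem_roots hy).eq_zero
    simp only [B, trace_sub, trace_smul, hK.trace_aeval, hroots, Multiset.map_cons,
      Multiset.sum_cons, hvanish, htrP, smul_eq_mul]
    ring
  rw [← sub_eq_zero]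
  exact hB.eq_zero_of_mul_self_eq_smul hBB htrB

theorem IsSymm.diag_mul_self_mem_Icc {M Q : Matrix n n ℝ} (hM : M.IsSymm) (hQ : Q.IsSymm)
    (hMQ : M * Q = M) (hQQ : Q * Q = Q) {a b : ℝ} (hab : b ^ 2 ≤ a ^ 2)
    (hMM : M * M = (a + b) • M - (a * b) • Q) (i : n) :
    (M * M) i i ∈ Set.Icc (b ^ 2 * Q i i) (a ^ 2 * Q i i) := by
  have hQM : Q * M = M := hM.mul_eq_of_mul_eq hQ hM hMQ
  have hMM' : M * M = (b + a) • M - (b * a) • Q := by rw [hMM, add_comm, mul_comm]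
  have hsymm : (M * M).IsSymm := by rw [IsSymm, transpose_mul, hM.eq]
  have hlow := (hsymm.sub (hQ.smul (b ^ 2))).diag_nonneg_of_mul_self_eq_smul
    (sub_nonneg.mpr hab) (mul_self_sub_sq_smul_mul_self_eq_smul hMQ hQM hQQ hMM) i
  have hupp := (hsymm.sub (hQ.smul (a ^ 2))).neg.diag_nonneg_of_mul_self_eq_smul
    (sub_nonneg.mpr hab) (by
      rw [neg_mul_neg, mul_self_sub_sq_smul_mul_self_eq_smul hMQ hQM hQQ hMM', smul_neg,
        ← neg_smul, neg_sub]) i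
  simp only [sub_apply, smul_apply, neg_apply, smul_eq_mul] at hlow hupp
  constructor <;> linarith

end DecidableEq

noncomputable def meanProjection (n : Type*) [Fintype n] : Matrix n n ℝ :=
  of fun _ _ => (Fintype.card n : ℝ)⁻¹

theorem isSymm_meanProjection : (meanProjection n).IsSymm := IsSymm.ext fun _ _ => rfl

theorem meanProjection_mul_self [Nonempty n] :
    meanProjection n * meanProjection n = meanProjection n := by
  ext i j
  simp [meanProjection, mul_apply]

theorem trace_meanProjection [Nonempty n] : (meanProjection n).trace = 1 := by
  simp [meanProjection, trace]

theorem mul_meanProjection_of_sum_row_eq_one {K : Matrix n n ℝ} (hrow : ∀ i, ∑ j, K i j = 1) :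
    K * meanProjection n = meanProjection n := by
  ext i j
  simp [meanProjection, mul_apply, ← Finset.sum_mul, hrow]

end Matrix

theorem diagonal_spectral_bound_general
    (K : Matrix (Fin 3) (Fin 3) ℝ) (hsymm : K.IsSymm)
    (hrow : ∀ i, ∑ j, K i j = 1)
    (κ₂ κ₃ : ℝ) (hchar : K.charpoly = (X - 1) * (X - C κ₂) * (X - C κ₃))
    (hκ : κ₃ ^ 2 ≤ κ₂ ^ 2) :
    ∀ i : Fin 3,
      κ₃ ^ 2 ≤ (3 * (K ^ 2) i i - 1) / 2 ∧ (3 * (K ^ 2) i i - 1) / 2 ≤ κ₂ ^ 2 := by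
  intro i
  set P := meanProjection (Fin 3)
  have hPsymm : P.IsSymm := isSymm_meanProjection
  have hPP : P * P = P := meanProjection_mul_self
  have hKP : K * P = P := mul_meanProjection_of_sum_row_eq_one hrow
  have hPK : P * K = P := hsymm.mul_eq_of_mul_eq hPsymm hPsymm hKP
  have hrel : (K - κ₂ • 1) * (K - κ₃ • 1) = ((1 - κ₂) * (1 - κ₃)) • P := by
    have h := hsymm.aeval_eq_eval_one_smul hPsymm hPP trace_meanProjection hKP
      (r := (X - C κ₂) * (X - C κ₃)) (by rw [hchar, mul_assoc])
    simpa [Algebra.algebraMap_eq_smul_one] using h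
  have hMQ : (K - P) * (1 - P) = K - P := by
    simp only [sub_mul, mul_sub, mul_one, hKP, hPP, sub_self, sub_zero]
  obtain ⟨hlow, hupp⟩ := (hsymm.sub hPsymm).diag_mul_self_mem_Icc (isSymm_one.sub hPsymm) hMQ
    (IsIdempotentElem.one_sub hPP).eq hκ (mul_self_sub_eq_of_sub_mul_sub hKP hPK hPP hrel) i
  have hL : K ^ 2 = (K - P) * (K - P) + P := by
    simp only [sq, sub_mul, mul_sub, hKP, hPK, hPP]; abel
  have hPii : P i i = 1 / 3 := by simp [P, meanProjection]
  rw [hL, Matrix.add_apply, hPii]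
  rw [Matrix.sub_apply, one_apply_eq, hPii] at hlow hupp
  constructor <;> linarith

/-- If `K` is a 3×3 real symmetric matrix with nonnegative entries and row
sums 1, with characteristic polynomial `(X - 1)(X - κ₂)(X - κ₃)` where `κ₃² ≤ κ₂²`, and
`L := K²`, then `κ₃² ≤ (3 L_{ii} - 1)/2 ≤ κ₂²` for every index `i`. -/
theorem diagonal_spectral_bound
    (K : Matrix (Fin 3) (Fin 3) ℝ) (hsymm : K.IsSymm)
    (hnonneg : ∀ i j, 0 ≤ K i j) (hrow : ∀ i, ∑ j, K i j = 1)
    (κ₂ κ₃ : ℝ) (hchar : K.charpoly = (X - 1) * (X - C κ₂) * (X - C κ₃))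
    (hκ : κ₃ ^ 2 ≤ κ₂ ^ 2) :
    ∀ i : Fin 3,
      κ₃ ^ 2 ≤ (3 * (K ^ 2) i i - 1) / 2 ∧ (3 * (K ^ 2) i i - 1) / 2 ≤ κ₂ ^ 2 :=
  diagonal_spectral_bound_general K hsymm hrow κ₂ κ₃ hchar hκ
end

section
/- Let K be a 3×3 real symmetric matrix with nonnegative entries and all row sums equal to 1, whose characteristic polynomial is (X−1)(X−κ₂)(X−κ₃), and set L := K². Let t₁, t₂, t₃ ≥ 0 and t_* := max(t₁,t₂,t₃). Assume κ₂² > t_* > κ₃², and assume that (3 L_{rr} − 1)/2 < κ₂² for every r with t_r = t_*. Then for every r ∈ {1,2,3}: t_r · (3 L_{rr} − 1)/2 < κ₂² · t_*. -/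
/-!
As `K` is symmetric and fixes the constants, it commutes with the orthogonal projection `E` onto
them. On the complement of the constants, `N := κ₂² (1 - E) - (K² - E)` acts as `κ₂² - K²`, which
is `κ₂² - κ₃²` times the projection onto the `κ₃`-eigenline. Hence `N² = (κ₂² - κ₃²) N`, so `N` is
positive semidefinite and its diagonal entries `(2κ₂² + 1)/3 - L_rr` are nonnegative, i.e.
`(3 L_rr - 1)/2 ≤ κ₂²`. Multiplying by `t_r ≤ t_*` gives the claim, strictly because either
`t_r < t_*` or the bound is strict by hypothesis.
-/

open Matrix Polynomial

theorem mul_self_eq_smul_of_annihilated {R A : Type*} [CommRing R] [Ring A] [Algebra R A]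
    {e m : A} {α β : R} (he : e * e = e) (hme : m * e = 0) (hem : e * m = 0)
    (hm : m * m - (α + β) • m + (α * β) • (1 - e) = 0) :
    (α • (1 - e) - m) * (α • (1 - e) - m) = (α - β) • (α • (1 - e) - m) := by
  rw [← sub_eq_zero, ← hm]
  simp only [sub_mul, mul_sub, smul_mul_assoc, mul_smul_comm, one_mul, mul_one, he, hme, hem,
    sub_zero, smul_sub]
  module

namespace Matrix

section ConstProj

variable {n 𝕜 : Type*} [Fintype n] [Field 𝕜]

variable (n 𝕜) in
def constProj : Matrix n n 𝕜 :=
  of fun _ _ => (Fintype.card n : 𝕜)⁻¹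

@[simp]
theorem constProj_apply (i j : n) : constProj n 𝕜 i j = (Fintype.card n : 𝕜)⁻¹ := rfl

theorem isSymm_constProj : (constProj n 𝕜).IsSymm := IsSymm.ext fun _ _ => rfl

theorem constProj_mul_self [CharZero 𝕜] [Nonempty n] :
    constProj n 𝕜 * constProj n 𝕜 = constProj n 𝕜 := by
  ext i j
  simp [mul_apply]

theorem mul_constProj {K : Matrix n n 𝕜} (hrow : ∀ i, ∑ j, K i j = 1) :
    K * constProj n 𝕜 = constProj n 𝕜 := by
  ext i j
  simp [mul_apply, ← Finset.sum_mul, hrow]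

theorem constProj_mul {K : Matrix n n 𝕜} (hcol : ∀ j, ∑ i, K i j = 1) :
    constProj n 𝕜 * K = constProj n 𝕜 := by
  ext i j
  simp [mul_apply, ← Finset.mul_sum, hcol]

end ConstProj

theorem trace_det_of_charpoly_eq {R : Type*} [CommRing R] {A : Matrix (Fin 3) (Fin 3) R}
    {a b c : R} (h : A.charpoly = (X - C a) * (X - C b) * (X - C c)) :
    A.trace = a + b + c ∧ A.det = a * b * c := by
  have hexpand : (X - C a) * (X - C b) * (X - C c) =
      X ^ 3 - C (a + b + c) * X ^ 2 + C (a * b + a * c + b * c) * X - C (a * b * c) := by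
    simp only [C_add, C_mul]; ring
  rw [hexpand] at h
  constructor
  · rw [trace_eq_neg_charpoly_coeff, h]
    simp only [coeff_sub, coeff_add, coeff_X_pow, coeff_C_mul, coeff_C, coeff_X]
    norm_num
  · rw [det_eq_sign_charpoly_coeff, h]
    simp only [coeff_sub, coeff_add, coeff_X_pow, coeff_C_mul, coeff_C, coeff_X]
    norm_num

theorem exists_eq_of_isSymm_of_rowsum {R : Type*} [CommRing R] {K : Matrix (Fin 3) (Fin 3) R}
    (hsymm : K.IsSymm) (hrow : ∀ i, ∑ j, K i j = 1) :
    ∃ p q r, K = !![1 - p - q, p, q; p, 1 - p - r, r; q, r, 1 - q - r] := by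
  refine ⟨K 0 1, K 0 2, K 1 2, ?_⟩
  have h := hsymm.apply
  have h0 := hrow 0; have h1 := hrow 1; have h2 := hrow 2
  simp only [Fin.sum_univ_three] at h0 h1 h2
  ext i j
  fin_cases i <;> fin_cases j <;> simp <;> grind

/-- `K² - constProj` kills the constants and acts on their orthogonal complement as `K²`, whose two
eigenvalues there have sum `(tr K - 1)² - 2 det K` and product `(det K)²`: this is Cayley–Hamilton
on that plane. -/
theorem sq_sub_constProj_annihilated {𝕜 : Type*} [Field 𝕜] [CharZero 𝕜]
    {K : Matrix (Fin 3) (Fin 3) 𝕜} (hsymm : K.IsSymm) (hrow : ∀ i, ∑ j, K i j = 1) :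
    (K ^ 2 - constProj (Fin 3) 𝕜) * (K ^ 2 - constProj (Fin 3) 𝕜)
      - ((K.trace - 1) ^ 2 - 2 * K.det) • (K ^ 2 - constProj (Fin 3) 𝕜)
      + K.det ^ 2 • (1 - constProj (Fin 3) 𝕜) = 0 := by
  obtain ⟨p, q, r, rfl⟩ := exists_eq_of_isSymm_of_rowsum hsymm hrow
  ext i j
  fin_cases i <;> fin_cases j <;>
    simp [sq, mul_apply, Fin.sum_univ_three, trace_fin_three, det_fin_three] <;> ring

theorem diag_nonneg_of_mul_self_eq_smul {n 𝕜 : Type*} [Fintype n] [Field 𝕜] [LinearOrder 𝕜]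
    [IsStrictOrderedRing 𝕜] {N : Matrix n n 𝕜} {c : 𝕜} (hsymm : N.IsSymm) (hN : N * N = c • N)
    (hc : 0 ≤ c) (i : n) : 0 ≤ N i i := by
  have hsum : ∑ j, N i j ^ 2 = c * N i i := by
    rw [← smul_eq_mul, ← smul_apply, ← hN, mul_apply]
    simp only [sq, hsymm.apply]
  rcases hc.lt_or_eq with hc | rfl
  · refine nonneg_of_mul_nonneg_right ?_ hc
    rw [← hsum]
    positivity
  · rw [zero_mul, Finset.sum_eq_zero_iff_of_nonneg fun j _ => sq_nonneg _] at hsum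
    exact ((pow_eq_zero_iff two_ne_zero).1 (hsum i (Finset.mem_univ i))).ge

theorem sq_diag_le_of_charpoly_eq {𝕜 : Type*} [Field 𝕜] [LinearOrder 𝕜]
    [IsStrictOrderedRing 𝕜] {K : Matrix (Fin 3) (Fin 3) 𝕜} (hsymm : K.IsSymm)
    (hrow : ∀ i, ∑ j, K i j = 1) {κ₂ κ₃ : 𝕜}
    (hchar : K.charpoly = (X - 1) * (X - C κ₂) * (X - C κ₃))
    (hκ : κ₃ ^ 2 ≤ κ₂ ^ 2) (i : Fin 3) : (3 * (K ^ 2) i i - 1) / 2 ≤ κ₂ ^ 2 := by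
  rw [← C_1] at hchar
  obtain ⟨htr, hdet⟩ := trace_det_of_charpoly_eq hchar
  have hm := sq_sub_constProj_annihilated hsymm hrow
  rw [htr, hdet, show (1 + κ₂ + κ₃ - 1) ^ 2 - 2 * (1 * κ₂ * κ₃) = κ₂ ^ 2 + κ₃ ^ 2 by ring,
    show (1 * κ₂ * κ₃) ^ 2 = κ₂ ^ 2 * κ₃ ^ 2 by ring] at hm
  set E := constProj (Fin 3) 𝕜
  have hKE : K * E = E := mul_constProj hrow
  have hEK : E * K = E := constProj_mul fun j => by simpa only [hsymm.apply] using hrow j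
  have hme : (K ^ 2 - E) * E = 0 := by
    rw [sub_mul, sq, mul_assoc, hKE, hKE, constProj_mul_self, sub_self]
  have hem : E * (K ^ 2 - E) = 0 := by
    rw [mul_sub, sq, ← mul_assoc, hEK, hEK, constProj_mul_self, sub_self]
  have hN := mul_self_eq_smul_of_annihilated (constProj_mul_self : E * E = E) hme hem hm
  have hNsymm : (κ₂ ^ 2 • (1 - E) - (K ^ 2 - E)).IsSymm :=
    ((isSymm_one.sub isSymm_constProj).smul _).sub ((hsymm.pow 2).sub isSymm_constProj)
  have hNdiag := diag_nonneg_of_mul_self_eq_smul hNsymm hN (sub_nonneg.2 hκ) i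
  simp only [sub_apply, smul_apply, one_apply_eq, constProj_apply, Fintype.card_fin,
    Nat.cast_ofNat, smul_eq_mul, E] at hNdiag
  linarith

end Matrix

theorem family_114_gap_general
    (K : Matrix (Fin 3) (Fin 3) ℝ) (hsymm : K.IsSymm)
    (hrow : ∀ i, ∑ j, K i j = 1)
    (κ₂ κ₃ : ℝ) (hchar : K.charpoly = (X - 1) * (X - C κ₂) * (X - C κ₃))
    (t : Fin 3 → ℝ) (ht : ∀ r, 0 ≤ t r)
    (hupper : κ₂ ^ 2 > max (max (t 0) (t 1)) (t 2))
    (hlower : max (max (t 0) (t 1)) (t 2) > κ₃ ^ 2)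
    (hnondeg : ∀ r : Fin 3, t r = max (max (t 0) (t 1)) (t 2) →
      (3 * (K ^ 2) r r - 1) / 2 < κ₂ ^ 2) :
    ∀ r : Fin 3,
      t r * (3 * (K ^ 2) r r - 1) / 2 < κ₂ ^ 2 * max (max (t 0) (t 1)) (t 2) := by
  set tmax := max (max (t 0) (t 1)) (t 2)
  have htmax_pos : 0 < tmax := (sq_nonneg κ₃).trans_lt hlower
  have hdiag := sq_diag_le_of_charpoly_eq hsymm hrow hchar (hlower.trans hupper).le
  intro r
  have hr : t r ≤ tmax := by fin_cases r <;> simp [tmax]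
  rw [mul_div_assoc]
  rcases hr.lt_or_eq with hlt | heq
  · calc t r * ((3 * (K ^ 2) r r - 1) / 2) ≤ t r * κ₂ ^ 2 :=
          mul_le_mul_of_nonneg_left (hdiag r) (ht r)
      _ < tmax * κ₂ ^ 2 := mul_lt_mul_of_pos_right hlt (htmax_pos.trans hupper)
      _ = κ₂ ^ 2 * tmax := mul_comm _ _
  · rw [heq, mul_comm]
    exact mul_lt_mul_of_pos_right (hnondeg r heq) htmax_pos

/-- Let `K` be a 3×3 symmetric stochastic matrix with characteristic
polynomial `(X - 1)(X - κ₂)(X - κ₃)`, and `L := K²`. Let `t₁, t₂, t₃ ≥ 0` with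
`t_* = max(t₁, t₂, t₃)`. If `κ₂² > t_* > κ₃²` and `(3 L_{rr} - 1)/2 < κ₂²` for every `r`
with `t_r = t_*`, then `t_r (3 L_{rr} - 1)/2 < κ₂² t_*` for every `r`. -/
theorem family_114_gap
    (K : Matrix (Fin 3) (Fin 3) ℝ) (hsymm : K.IsSymm)
    (hnonneg : ∀ i j, 0 ≤ K i j) (hrow : ∀ i, ∑ j, K i j = 1)
    (κ₂ κ₃ : ℝ) (hchar : K.charpoly = (X - 1) * (X - C κ₂) * (X - C κ₃))
    (t : Fin 3 → ℝ) (ht : ∀ r, 0 ≤ t r)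
    (hupper : κ₂ ^ 2 > max (max (t 0) (t 1)) (t 2))
    (hlower : max (max (t 0) (t 1)) (t 2) > κ₃ ^ 2)
    (hnondeg : ∀ r : Fin 3, t r = max (max (t 0) (t 1)) (t 2) →
      (3 * (K ^ 2) r r - 1) / 2 < κ₂ ^ 2) :
    ∀ r : Fin 3,
      t r * (3 * (K ^ 2) r r - 1) / 2 < κ₂ ^ 2 * max (max (t 0) (t 1)) (t 2) :=
  family_114_gap_general K hsymm hrow κ₂ κ₃ hchar t ht hupper hlower hnondeg
end

section
/- Let K be a 3×3 real symmetric matrix with nonnegative entries and all row sums equal to 1, whose characteristic polynomial is (X−1)(X−κ₂)(X−κ₃), and set L := K². Let t₁, t₂, t₃ ≥ 0 and t_* := max(t₁,t₂,t₃). Assume κ₂² > t_* > κ₃². Then for all indices p, r ∈ {1,2,3}: (1/3)·(det L + t_r·(3 L_{pp} − 1)) < κ₂² · t_*. -/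
/-!
Write `s = κ₂ + κ₃` and `E = tr K - 3 K_pp`. For a symmetric `3 × 3` matrix with unit row sums,
`3 L_pp - 1 = κ₂² + κ₃² - s E`, while the discriminant `s² - 4 κ₂ κ₃ = (κ₂ - κ₃)²` exceeds `E²`
by three times the square of the difference of the two off-diagonal entries of row `p`.
Hence `|s E| ≤ κ₂² - κ₃²` and `3 L_pp - 1 ≤ 2 κ₂²`; Cauchy–Schwarz on row `p` gives
`3 L_pp - 1 ≥ 0`. As `det L = κ₂² κ₃² < κ₂² t_*`, the left side is below
`(κ₂² t_* + 2 κ₂² t_*) / 3`.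
-/

open Matrix Polynomial

theorem Matrix.trace_eq_sum_and_det_eq_prod_of_charpoly_eq {R n : Type*} [CommRing R]
    [IsDomain R] [Fintype n] [DecidableEq n] {A : Matrix n n R} {s : Multiset R}
    (h : A.charpoly = (s.map fun a => X - C a).prod) : A.trace = s.sum ∧ A.det = s.prod := by
  have hsplits : A.charpoly.Splits :=
    h ▸ Splits.multisetProd (by simp [Splits.X_sub_C])
  have hroots : A.charpoly.roots = s := by rw [h, roots_multiset_prod_X_sub_C]
  rw [trace_eq_sum_roots_charpoly_of_splits hsplits, det_eq_prod_roots_charpoly_of_splits hsplits,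
    hroots]
  exact ⟨rfl, rfl⟩

theorem add_sq_sub_mul_le_two_mul_sq {μ ν E : ℝ} (hνμ : ν ^ 2 ≤ μ ^ 2)
    (hE : E ^ 2 ≤ (μ - ν) ^ 2) : μ ^ 2 + ν ^ 2 - (μ + ν) * E ≤ 2 * μ ^ 2 := by
  have hsq : ((μ + ν) * E) ^ 2 ≤ (μ ^ 2 - ν ^ 2) ^ 2 :=
    calc ((μ + ν) * E) ^ 2 = (μ + ν) ^ 2 * E ^ 2 := by ring
      _ ≤ (μ + ν) ^ 2 * (μ - ν) ^ 2 := by gcongr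
      _ = (μ ^ 2 - ν ^ 2) ^ 2 := by ring
  linarith [(abs_le_of_sq_le_sq' hsq (by linarith)).1]

namespace Matrix.IsSymm

theorem one_le_card_mul_sq_apply_self {n : Type*} [Fintype n] [DecidableEq n] {K : Matrix n n ℝ}
    (hK : K.IsSymm) (hrow : ∀ i, ∑ j, K i j = 1) (p : n) :
    1 ≤ Fintype.card n * (K ^ 2) p p := by
  have hdiag : (K ^ 2) p p = ∑ j, K p j ^ 2 := by simp only [sq, mul_apply, hK.apply p]
  simpa [hdiag, hrow p] using sq_sum_le_card_mul_sum_sq (s := Finset.univ) (f := K p)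

variable {K : Matrix (Fin 3) (Fin 3) ℝ}

theorem exists_eq_of_rowSum_eq_one (hK : K.IsSymm) (hrow : ∀ i, ∑ j, K i j = 1) :
    ∃ u v w : ℝ, K = !![1 - u - v, u, v; u, 1 - u - w, w; v, w, 1 - v - w] := by
  refine ⟨K 0 1, K 0 2, K 1 2, ?_⟩
  have h0 := hrow 0
  have h1 := hrow 1
  have h2 := hrow 2
  simp only [Fin.sum_univ_three, hK.apply 0 1, hK.apply 0 2, hK.apply 1 2] at h0 h1 h2
  ext i j
  fin_cases i <;> fin_cases j <;> simp [hK.apply 0 1, hK.apply 0 2, hK.apply 1 2] <;> linarith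

theorem three_mul_sq_apply_self_sub_one_eq (hK : K.IsSymm) (hrow : ∀ i, ∑ j, K i j = 1)
    (p : Fin 3) :
    3 * (K ^ 2) p p - 1
      = (K.trace - 1) ^ 2 - 2 * K.det - (K.trace - 1) * (K.trace - 3 * K p p) := by
  obtain ⟨u, v, w, rfl⟩ := hK.exists_eq_of_rowSum_eq_one hrow
  fin_cases p <;> simp [trace_fin_three, det_fin_three, sq, mul_apply, Fin.sum_univ_three] <;> ring

theorem sq_trace_sub_three_mul_apply_self_le (hK : K.IsSymm) (hrow : ∀ i, ∑ j, K i j = 1)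
    (p : Fin 3) : (K.trace - 3 * K p p) ^ 2 ≤ (K.trace - 1) ^ 2 - 4 * K.det := by
  obtain ⟨u, v, w, rfl⟩ := hK.exists_eq_of_rowSum_eq_one hrow
  fin_cases p <;> simp [trace_fin_three, det_fin_three] <;>
    nlinarith [sq_nonneg (u - v), sq_nonneg (u - w), sq_nonneg (v - w)]

theorem three_mul_sq_apply_self_sub_one_le (hK : K.IsSymm) (hrow : ∀ i, ∑ j, K i j = 1)
    {κ₂ κ₃ : ℝ} (htrace : K.trace = 1 + κ₂ + κ₃) (hdet : K.det = κ₂ * κ₃)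
    (hκ : κ₃ ^ 2 ≤ κ₂ ^ 2) (p : Fin 3) : 3 * (K ^ 2) p p - 1 ≤ 2 * κ₂ ^ 2 := by
  have hdiscr := hK.sq_trace_sub_three_mul_apply_self_le hrow p
  rw [htrace, hdet] at hdiscr
  rw [hK.three_mul_sq_apply_self_sub_one_eq hrow p, htrace, hdet]
  convert add_sq_sub_mul_le_two_mul_sq hκ (hdiscr.trans_eq (by ring)) using 1
  ring

end Matrix.IsSymm

theorem family_123_gap_general
    (K : Matrix (Fin 3) (Fin 3) ℝ) (hsymm : K.IsSymm)
    (hrow : ∀ i, ∑ j, K i j = 1)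
    (κ₂ κ₃ : ℝ) (hchar : K.charpoly = (X - 1) * (X - C κ₂) * (X - C κ₃))
    (t : Fin 3 → ℝ)
    (hupper : κ₂ ^ 2 > max (max (t 0) (t 1)) (t 2))
    (hlower : max (max (t 0) (t 1)) (t 2) > κ₃ ^ 2) :
    ∀ p r : Fin 3,
      (1 / 3) * ((K ^ 2).det + t r * (3 * (K ^ 2) p p - 1))
        < κ₂ ^ 2 * max (max (t 0) (t 1)) (t 2) := by
  intro p r
  set T := max (max (t 0) (t 1)) (t 2)
  obtain ⟨htrace, hdet⟩ : K.trace = 1 + κ₂ + κ₃ ∧ K.det = κ₂ * κ₃ := by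
    simpa [add_assoc, mul_assoc] using
      trace_eq_sum_and_det_eq_prod_of_charpoly_eq (s := {1, κ₂, κ₃}) (by
        rw [hchar]
        simp only [Multiset.insert_eq_cons, Multiset.map_cons, Multiset.map_singleton, map_one,
          Multiset.prod_cons, Multiset.prod_singleton]
        ring)
  have hr : t r ≤ T := by fin_cases r <;> simp [T]
  have hT : 0 < T := (sq_nonneg κ₃).trans_lt hlower
  have hS₀ : 0 ≤ 3 * (K ^ 2) p p - 1 := by
    simpa using hsymm.one_le_card_mul_sq_apply_self hrow p
  have hS : 3 * (K ^ 2) p p - 1 ≤ 2 * κ₂ ^ 2 :=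
    hsymm.three_mul_sq_apply_self_sub_one_le hrow htrace hdet
      (hlower.lt.trans hupper).le p
  rw [det_pow, hdet]
  linarith [mul_nonneg (sub_nonneg.2 hr) hS₀, mul_nonneg (sub_nonneg.2 hS) hT.le,
    mul_lt_mul_of_pos_left hlower (hT.trans hupper)]

/-- Let `K` be a 3×3 symmetric stochastic matrix with characteristic
polynomial `(X - 1)(X - κ₂)(X - κ₃)`, and `L := K²`. Let `t₁, t₂, t₃ ≥ 0` with
`t_* = max(t₁, t₂, t₃)`. If `κ₂² > t_* > κ₃²`, then
`(1/3)(det L + t_r (3 L_{pp} - 1)) < κ₂² t_*` for all indices `p, r`. -/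
theorem family_123_gap
    (K : Matrix (Fin 3) (Fin 3) ℝ) (hsymm : K.IsSymm)
    (hnonneg : ∀ i j, 0 ≤ K i j) (hrow : ∀ i, ∑ j, K i j = 1)
    (κ₂ κ₃ : ℝ) (hchar : K.charpoly = (X - 1) * (X - C κ₂) * (X - C κ₃))
    (t : Fin 3 → ℝ) (ht : ∀ r, 0 ≤ t r)
    (hupper : κ₂ ^ 2 > max (max (t 0) (t 1)) (t 2))
    (hlower : max (max (t 0) (t 1)) (t 2) > κ₃ ^ 2) :
    ∀ p r : Fin 3,
      (1 / 3) * ((K ^ 2).det + t r * (3 * (K ^ 2) p p - 1))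
        < κ₂ ^ 2 * max (max (t 0) (t 1)) (t 2) :=
  family_123_gap_general K hsymm hrow κ₂ κ₃ hchar t hupper hlower
end

section
/- For the six-state model with the explicit parameters c₁₂ = 0.003678, c₁₃ = 0.119189, c₂₃ = 0.116629, (a₁,b₁) = (0.536022, 0.218244), (a₂,b₂) = (0.5780345, 0.1813515), (a₃,b₃) = (0.389373, 0.138991), let κ₂ ≥ κ₃ be the two eigenvalues of the quotient matrix K (with K_{ii} = a_i + b_i, K_{ij} = 2c_{ij} for i ≠ j) other than the eigenvalue 1, and let t_* := max_r (a_r − b_r)². Then the local-mode-dominated ordering κ₂² > t_* > κ₃² holds. -/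
open Matrix Polynomial

/-!
Since `K.charpoly = (X - 1)(X - κ₂)(X - κ₃)`, the eigenvalues satisfy `κ₂ + κ₃ = tr K - 1` and
`κ₂ κ₃ = det K`, so `(t - κ₂)(t - κ₃) = t² - (tr K - 1) t + det K`. At `t = a₂ - b₂ = √t_*` this
is negative, hence `κ₃ < t < κ₂`; and `det K > 0` makes `κ₃` positive, so squaring keeps the order.
-/

namespace Matrix

variable {R n : Type*} [CommRing R] [Fintype n] [DecidableEq n]
  {M : Matrix n n R} {s : Multiset R}

theorem splits_charpoly_of_eq_prod (h : M.charpoly = (s.map (X - C ·)).prod) :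
    M.charpoly.Splits :=
  h ▸ Splits.multisetProd (by simp [Splits.X_sub_C])

theorem trace_eq_sum_of_charpoly_eq_prod [IsDomain R]
    (h : M.charpoly = (s.map (X - C ·)).prod) :
    M.trace = s.sum := by
  rw [trace_eq_sum_roots_charpoly_of_splits (splits_charpoly_of_eq_prod h), h,
    roots_multiset_prod_X_sub_C]

theorem det_eq_prod_of_charpoly_eq_prod [IsDomain R]
    (h : M.charpoly = (s.map (X - C ·)).prod) :
    M.det = s.prod := by
  rw [det_eq_prod_roots_charpoly_of_splits (splits_charpoly_of_eq_prod h), h,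
    roots_multiset_prod_X_sub_C]

theorem add_eq_trace_sub_one_and_mul_eq_det_of_charpoly_eq [IsDomain R] {u v : R}
    (h : M.charpoly = (X - 1) * (X - C u) * (X - C v)) :
    u + v = M.trace - 1 ∧ u * v = M.det := by
  have h' : M.charpoly = (({1, u, v} : Multiset R).map (X - C ·)).prod := by
    simp [h, mul_assoc]
  rw [trace_eq_sum_of_charpoly_eq_prod h', det_eq_prod_of_charpoly_eq_prod h']
  simp

end Matrix

theorem sq_lt_sq_and_sq_lt_sq_of_sub_mul_sub_neg {α : Type*} [Field α] [LinearOrder α]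
    [IsStrictOrderedRing α] {t u v : α} (hvu : v ≤ u) (ht : 0 < t) (huv : 0 < u * v)
    (h : (t - u) * (t - v) < 0) : t ^ 2 < u ^ 2 ∧ v ^ 2 < t ^ 2 := by
  obtain ⟨hvt, htu⟩ : v < t ∧ t < u := by
    rcases mul_neg_iff.mp h with ⟨h₁, h₂⟩ | ⟨h₁, h₂⟩
    · exact absurd hvu (by linarith)
    · constructor <;> linarith
  have hv : 0 < v := pos_of_mul_pos_right huv (ht.trans htu).le
  exact ⟨pow_lt_pow_left₀ htu ht.le two_ne_zero, pow_lt_pow_left₀ hvt hv.le two_ne_zero⟩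

/-- For the explicit parameters `c₁₂ = 0.003678`, `c₁₃ = 0.119189`,
`c₂₃ = 0.116629`, `(a₁,b₁) = (0.536022, 0.218244)`, `(a₂,b₂) = (0.5780345, 0.1813515)`,
`(a₃,b₃) = (0.389373, 0.138991)`, if `κ₂ ≥ κ₃` are the two eigenvalues of the quotient
matrix `K` other than the eigenvalue `1`, and `t_* = max_r (a_r - b_r)²`, then the
local-mode-dominated ordering `κ₂² > t_* > κ₃²` holds. -/
theorem explicit_local_mode_ordering
    (κ₂ κ₃ : ℝ) (hord : κ₂ ≥ κ₃)
    (hchar : (quotientK 0.536022 0.5780345 0.389373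
        0.218244 0.1813515 0.138991 0.003678 0.119189 0.116629).charpoly
      = (X - 1) * (X - C κ₂) * (X - C κ₃)) :
    κ₂ ^ 2 > max (max ((0.536022 - 0.218244 : ℝ) ^ 2) ((0.5780345 - 0.1813515 : ℝ) ^ 2))
        ((0.389373 - 0.138991 : ℝ) ^ 2) ∧
    max (max ((0.536022 - 0.218244 : ℝ) ^ 2) ((0.5780345 - 0.1813515 : ℝ) ^ 2))
        ((0.389373 - 0.138991 : ℝ) ^ 2) > κ₃ ^ 2 := by
  set K := quotientK 0.536022 0.5780345 0.389373
    0.218244 0.1813515 0.138991 0.003678 0.119189 0.116629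
  have htrace : K.trace = 2.042016 := by
    simp only [K, quotientK, trace_fin_three_of]
    norm_num
  have hdet : K.det = 0.21923478982 := by
    simp only [K, quotientK, det_fin_three, of_apply, cons_val', cons_val_zero, cons_val_one,
      cons_val, cons_val_fin_one]
    norm_num
  obtain ⟨hsum, hprod⟩ := add_eq_trace_sub_one_and_mul_eq_det_of_charpoly_eq hchar
  rw [htrace] at hsum
  rw [hdet] at hprod
  have hmax : max (max ((0.536022 - 0.218244 : ℝ) ^ 2) ((0.5780345 - 0.1813515 : ℝ) ^ 2))
      ((0.389373 - 0.138991 : ℝ) ^ 2) = 0.396683 ^ 2 := by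
    norm_num
  rw [hmax]
  refine sq_lt_sq_and_sq_lt_sq_of_sub_mul_sub_neg hord (by norm_num) (by rw [hprod]; norm_num) ?_
  have hexpand : ((0.396683 : ℝ) - κ₂) * (0.396683 - κ₃)
      = 0.396683 ^ 2 - (κ₂ + κ₃) * 0.396683 + κ₂ * κ₃ := by ring
  rw [hexpand, hsum, hprod]
  norm_num
end

section
/- For the six-state model with the explicit parameters c₁₂ = 0.003678, c₁₃ = 0.119189, c₂₃ = 0.116629, (a₁,b₁) = (0.536022, 0.218244), (a₂,b₂) = (0.5780345, 0.1813515), (a₃,b₃) = (0.389373, 0.138991), set T := P². Then for every partition 𝒜 of the six states into three nonempty cells, det Q_𝒜(T) < λ₁λ₂λ₃, where λ₁ ≥ λ₂ ≥ λ₃ are the three largest eigenvalues (with multiplicity) of T; that is, the supremum of det Q_𝒜(T) over all 90 three-cell partitions is strictly smaller than the relaxed determinant benchmark 𝔇ʳᵉˡ₃(T). -/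
open Matrix Polynomial

/-- The explicit six-state transition matrix of the certified example. -/
noncomputable def Pex : Matrix (Fin 6) (Fin 6) ℝ :=
  sixStateP 0.536022 0.5780345 0.389373 0.218244 0.1813515 0.138991
    0.003678 0.119189 0.116629

/-- The 6×3 matrix of normalized indicator columns `1_{A j}/√|A j|` of an (ordered)
partition `A` of the six states into three cells. -/
noncomputable def partH (A : Fin 3 → Finset (Fin 6)) : Matrix (Fin 6) (Fin 3) ℝ :=
  Matrix.of fun x j => if x ∈ A j then (Real.sqrt ((A j).card))⁻¹ else 0

/-!
Write `T = P²`. The vectors `e₁ - e₂`, `e₃ - e₄`, `e₅ - e₆` are eigenvectors of `P` with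
eigenvalues `aᵢ - bᵢ`, and the block indicators span a `P`-invariant subspace on which `P` acts by
the stochastic `3 × 3` quotient matrix `B`; hence `χ_T = ∏ᵢ (X - (aᵢ - bᵢ)²) · χ_{B²}`. So `T` has
the eigenvalues `1` and `(a₂ - b₂)² = 0.396683²`, and a third one in `(1/2, 3/5)`, where `χ_T`
changes sign; therefore `λ₁λ₂λ₃ ≥ 0.396683² / 2`.

A partition is the family of fibres of some `f : Fin 6 → Fin 3`, and
`det Q_𝒜(T) = det (Gᵀ T G) / ∏ⱼ |A_j|` for the `0/1` indicator matrix `G` of `f`. After scaling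
`P` by `10⁷` this is an integer computation, and `det Q_𝒜(T) < 0.396683² / 2` is checked for all
`3⁶` maps `f` by evaluation in the kernel.
-/

open Finset

namespace Matrix

variable {R : Type*} [CommRing R] {m n : Type*} [Fintype m] [Fintype n] [DecidableEq m]
  [DecidableEq n] {A : Matrix m m R} {K : Matrix n n R} {E : Matrix m n R}

theorem pow_mul_eq_mul_pow (h : A * E = E * K) (k : ℕ) : A ^ k * E = E * K ^ k := by
  induction k with
  | zero => simp
  | succ k ih =>
    rw [pow_succ', Matrix.mul_assoc, ih, ← Matrix.mul_assoc, h, Matrix.mul_assoc, ← pow_succ']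

theorem charpoly_eq_of_mul_eq_mul [Nontrivial R] {F : Matrix n m R}
    (hcard : Fintype.card m = Fintype.card n) (hFE : F * E = 1) (h : A * E = E * K) :
    A.charpoly = K.charpoly := by
  have hEF : E * F = 1 := (mul_eq_one_comm_of_card_eq m n R hcard).mpr hFE
  have key := charpoly_mul_comm' E (F * A)
  rwa [← Matrix.mul_assoc, hEF, Matrix.one_mul, Matrix.mul_assoc, h, ← Matrix.mul_assoc, hFE,
    Matrix.one_mul, hcard, (isRegular_X_pow _).left.eq_iff] at key

end Matrix

theorem Antitone.le_apply_of_lt_card {α : Type*} [Preorder α] {n : ℕ} {μ : Fin n → α}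
    (hμ : Antitone μ) {c : α} {s : Finset (Fin n)} (hc : ∀ i ∈ s, c ≤ μ i) {k : Fin n}
    (hk : (k : ℕ) < #s) : c ≤ μ k := by
  obtain ⟨i, hi, hki⟩ : ∃ i ∈ s, k ≤ i := by
    by_contra! h
    have hsub : s ⊆ Iio k := fun i hi => mem_Iio.mpr (h i hi)
    have := card_le_card hsub
    rw [Fin.card_Iio] at this
    omega
  exact (hc i hi).trans (hμ hki)

theorem exists_eq_of_prod_sub_eq_zero {ι R : Type*} [Fintype ι] [CommRing R] [IsDomain R]
    {μ : ι → R} {x : R} (h : ∏ i, (x - μ i) = 0) : ∃ i, μ i = x := by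
  obtain ⟨i, -, hi⟩ := prod_eq_zero_iff.mp h
  exact ⟨i, (sub_eq_zero.mp hi).symm⟩

theorem exists_apply_mem_Ioo_of_prod_sub_pos_of_neg {ι : Type*} [Fintype ι] {μ : ι → ℝ}
    {a b : ℝ} (hab : a ≤ b) (ha : 0 < ∏ i, (a - μ i)) (hb : ∏ i, (b - μ i) < 0) :
    ∃ i, μ i ∈ Set.Ioo a b := by
  obtain ⟨x, hx, hx0⟩ := intermediate_value_Ioo' hab
    (Continuous.continuousOn (f := fun x => ∏ i, (x - μ i)) (by fun_prop)) ⟨hb, ha⟩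
  obtain ⟨i, hi⟩ := exists_eq_of_prod_sub_eq_zero hx0
  exact ⟨i, hi ▸ hx⟩

theorem exists_eq_fibres {ι α : Type*} [Fintype α] [DecidableEq ι] (A : ι → Finset α)
    (hdisj : Pairwise fun j k => Disjoint (A j) (A k)) (hcov : ∀ x, ∃ j, x ∈ A j) :
    ∃ f : α → ι, A = fun j => ({x | f x = j} : Finset α) := by
  choose f hf using hcov
  refine ⟨f, funext fun j => Finset.ext fun x => ?_⟩
  simp only [mem_filter, mem_univ, true_and]
  refine ⟨fun hx => ?_, fun h => h ▸ hf x⟩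
  by_contra hne
  exact disjoint_left.mp (hdisj hne) (hf x) hx

section SixState

variable (a₁ a₂ a₃ b₁ b₂ b₃ c₁₂ c₁₃ c₂₃ : ℝ)

def sixStateQuotient : Matrix (Fin 3) (Fin 3) ℝ :=
  !![a₁ + b₁, 2 * c₁₂, 2 * c₁₃;
     2 * c₁₂, a₂ + b₂, 2 * c₂₃;
     2 * c₁₃, 2 * c₂₃, a₃ + b₃]

def sixStateBasis : Matrix (Fin 6) (Fin 3 ⊕ Fin 3) ℝ :=
  fromCols !![1, 0, 0; -1, 0, 0; 0, 1, 0; 0, -1, 0; 0, 0, 1; 0, 0, -1]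
    !![1, 0, 0; 1, 0, 0; 0, 1, 0; 0, 1, 0; 0, 0, 1; 0, 0, 1]

theorem transpose_sixStateBasis_mul_self : sixStateBasisᵀ * sixStateBasis = (2 : ℝ) • 1 := by
  simp only [sixStateBasis, transpose_fromCols, fromRows_mul_fromCols, ← fromBlocks_one]
  rw [fromBlocks_smul, smul_zero]
  congr 1 <;> ext i j <;> fin_cases i <;> fin_cases j <;> simp [mul_apply, Fin.sum_univ_six] <;>
    norm_num

theorem sixStateP_mul_sixStateBasis :
    sixStateP a₁ a₂ a₃ b₁ b₂ b₃ c₁₂ c₁₃ c₂₃ * sixStateBasis =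
      sixStateBasis * fromBlocks (diagonal ![a₁ - b₁, a₂ - b₂, a₃ - b₃]) 0 0
        (sixStateQuotient a₁ a₂ a₃ b₁ b₂ b₃ c₁₂ c₁₃ c₂₃) := by
  simp only [sixStateBasis, mul_fromCols, fromCols_mul_fromBlocks, Matrix.mul_zero, add_zero,
    zero_add]
  congr 1 <;> ext i j <;> fin_cases i <;> fin_cases j <;>
    simp [sixStateP, sixStateQuotient, mul_apply, Fin.sum_univ_six, Fin.sum_univ_three] <;> ring

theorem charpoly_sixStateP_pow (k : ℕ) :
    (sixStateP a₁ a₂ a₃ b₁ b₂ b₃ c₁₂ c₁₃ c₂₃ ^ k).charpoly =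
      (∏ j, (X - C (![a₁ - b₁, a₂ - b₂, a₃ - b₃] j ^ k))) *
        (sixStateQuotient a₁ a₂ a₃ b₁ b₂ b₃ c₁₂ c₁₃ c₂₃ ^ k).charpoly := by
  rw [charpoly_eq_of_mul_eq_mul (F := (2 : ℝ)⁻¹ • sixStateBasisᵀ) rfl
    (by rw [Matrix.smul_mul, transpose_sixStateBasis_mul_self, smul_smul]; norm_num)
    (pow_mul_eq_mul_pow (sixStateP_mul_sixStateBasis ..) k),
    fromBlocks_diagonal_pow, diagonal_pow, charpoly_fromBlocks_zero₁₂, charpoly_diagonal]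
  rfl

end SixState

theorem eval_charpoly_Pex_sq (x : ℝ) :
    (Pex ^ 2).charpoly.eval x =
      (x - 0.317778 ^ 2) * (x - 0.396683 ^ 2) * (x - 0.250382 ^ 2) *
        (scalar (Fin 3) x - sixStateQuotient 0.536022 0.5780345 0.389373 0.218244 0.1813515
          0.138991 0.003678 0.119189 0.116629 ^ 2).det := by
  rw [Pex, charpoly_sixStateP_pow, eval_mul, eval_prod, eval_charpoly, Fin.prod_univ_three]
  congr 1
  simp only [eval_sub, eval_X, eval_C, cons_val_zero, cons_val_one, cons_val_two, head_cons,
    tail_cons]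
  norm_num

theorem eval_charpoly_Pex_sq_one : (Pex ^ 2).charpoly.eval 1 = 0 := by
  rw [eval_charpoly_Pex_sq]
  simp [sixStateQuotient, det_fin_three, sq]
  norm_num

theorem eval_charpoly_Pex_sq_half_pos : 0 < (Pex ^ 2).charpoly.eval (1 / 2) := by
  rw [eval_charpoly_Pex_sq]
  simp [sixStateQuotient, det_fin_three, sq]
  norm_num

theorem eval_charpoly_Pex_sq_three_fifths_neg : (Pex ^ 2).charpoly.eval (3 / 5) < 0 := by
  rw [eval_charpoly_Pex_sq]
  simp [sixStateQuotient, det_fin_three, sq]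
  norm_num

theorem Pex_sq_eigenvalues_ge {μ : Fin 6 → ℝ} (hμ : Antitone μ)
    (hchar : (Pex ^ 2).charpoly = ∏ i, (X - C (μ i))) :
    1 ≤ μ 0 ∧ 1 / 2 ≤ μ 1 ∧ 0.396683 ^ 2 ≤ μ 2 := by
  have hprod (x : ℝ) : ∏ i, (x - μ i) = (Pex ^ 2).charpoly.eval x := by
    simp [hchar, eval_prod]
  obtain ⟨i₁, h₁⟩ := exists_eq_of_prod_sub_eq_zero ((hprod 1).trans eval_charpoly_Pex_sq_one)
  obtain ⟨i₂, h₂⟩ := exists_apply_mem_Ioo_of_prod_sub_pos_of_neg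
    (by norm_num : (1 / 2 : ℝ) ≤ 3 / 5) ((hprod _).symm ▸ eval_charpoly_Pex_sq_half_pos)
    ((hprod _).symm ▸ eval_charpoly_Pex_sq_three_fifths_neg)
  obtain ⟨i₃, h₃⟩ : ∃ i, μ i = 0.396683 ^ 2 :=
    exists_eq_of_prod_sub_eq_zero (by rw [hprod, eval_charpoly_Pex_sq]; ring)
  have h₁₂ : i₁ ≠ i₂ := fun h => by rw [h] at h₁; linarith [h₂.2]
  have h₁₃ : i₁ ≠ i₃ := fun h => by rw [h, h₃] at h₁; norm_num at h₁
  have h₂₃ : i₂ ≠ i₃ := fun h => by rw [h, h₃] at h₂; norm_num at h₂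
  refine ⟨h₁ ▸ hμ (Fin.zero_le i₁), hμ.le_apply_of_lt_card (s := {i₁, i₂}) ?_ ?_,
    hμ.le_apply_of_lt_card (s := {i₁, i₂, i₃}) ?_ ?_⟩
  · simp only [mem_insert, mem_singleton, forall_eq_or_imp, forall_eq]
    constructor <;> linarith [h₂.1]
  · rw [card_pair h₁₂]
    decide
  · simp only [mem_insert, mem_singleton, forall_eq_or_imp, forall_eq]
    refine ⟨?_, ?_, h₃.ge⟩ <;> linarith [h₂.1]
  · rw [card_eq_three.mpr ⟨i₁, i₂, i₃, h₁₂, h₁₃, h₂₃, rfl⟩]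
    decide

section CellIndicator

variable {m n : Type*} [DecidableEq n]

def cellIndicator (R : Type*) [Zero R] [One R] (f : m → n) : Matrix m n R :=
  of fun x j => if f x = j then 1 else 0

theorem map_cellIndicator {R S : Type*} [NonAssocSemiring R] [NonAssocSemiring S] (φ : R →+* S)
    (f : m → n) : (cellIndicator R f).map φ = cellIndicator S f := by
  ext x j
  simp [cellIndicator, apply_ite φ]

end CellIndicator

theorem partH_fibres (f : Fin 6 → Fin 3) :
    partH (fun j => {x | f x = j}) =
      cellIndicator ℝ f * diagonal fun j => (√(#{x | f x = j} : ℝ))⁻¹ := by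
  ext x j
  simp [partH, cellIndicator, mul_diagonal]

theorem det_partH_fibres (f : Fin 6 → Fin 3) (T : Matrix (Fin 6) (Fin 6) ℝ) :
    ((partH fun j => {x | f x = j})ᵀ * T * partH fun j => {x | f x = j}).det =
      ((cellIndicator ℝ f)ᵀ * T * cellIndicator ℝ f).det / ∏ j, (#{x | f x = j} : ℝ) := by
  set D : Matrix (Fin 3) (Fin 3) ℝ := diagonal fun j => (√(#{x | f x = j} : ℝ))⁻¹
  have hD : (cellIndicator ℝ f * D)ᵀ * T * (cellIndicator ℝ f * D) =
      D * ((cellIndicator ℝ f)ᵀ * T * cellIndicator ℝ f) * D := by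
    simp only [transpose_mul, D, diagonal_transpose, Matrix.mul_assoc]
  have hsq (j : Fin 3) :
      (√(#{x | f x = j} : ℝ))⁻¹ * (√(#{x | f x = j} : ℝ))⁻¹ = (#{x | f x = j} : ℝ)⁻¹ := by
    rw [← mul_inv, Real.mul_self_sqrt (Nat.cast_nonneg _)]
  rw [partH_fibres, hD, det_mul, det_mul, det_diagonal, div_eq_mul_inv, ← prod_inv_distrib,
    ← prod_congr rfl fun j _ => hsq j, prod_mul_distrib]
  ring

def PexInt : Matrix (Fin 6) (Fin 6) ℤ :=
  !![5360220, 2182440,   36780,   36780, 1191890, 1191890;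
     2182440, 5360220,   36780,   36780, 1191890, 1191890;
       36780,   36780, 5780345, 1813515, 1166290, 1166290;
       36780,   36780, 1813515, 5780345, 1166290, 1166290;
     1191890, 1191890, 1166290, 1166290, 3893730, 1389910;
     1191890, 1191890, 1166290, 1166290, 1389910, 3893730]

theorem Pex_eq_smul_map : Pex = (10 ^ 7 : ℝ)⁻¹ • PexInt.map (Int.castRingHom ℝ) := by
  ext i j
  fin_cases i <;> fin_cases j <;> norm_num [Pex, sixStateP, PexInt]

theorem two_mul_det_cellIndicator_PexInt_sq_lt : ∀ f : Fin 6 → Fin 3, Function.Surjective f →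
    2 * ((cellIndicator ℤ f)ᵀ * (PexInt * PexInt) * cellIndicator ℤ f).det <
      396683 ^ 2 * 10 ^ 30 * ∏ j, (#{x | f x = j} : ℤ) := by
  intro f hf
  -- `det` unfolds to a sum over `Equiv.Perm (Fin 3)`, which the kernel evaluates far more slowly.
  rw [det_fin_three]
  revert f
  decide +kernel

theorem det_cellIndicator_Pex_sq_lt (f : Fin 6 → Fin 3) (hf : Function.Surjective f) :
    ((cellIndicator ℝ f)ᵀ * Pex ^ 2 * cellIndicator ℝ f).det <
      0.396683 ^ 2 / 2 * ∏ j, (#{x | f x = j} : ℝ) := by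
  have hcast : (cellIndicator ℝ f)ᵀ * Pex ^ 2 * cellIndicator ℝ f = (10 ^ 14 : ℝ)⁻¹ •
      ((cellIndicator ℤ f)ᵀ * (PexInt * PexInt) * cellIndicator ℤ f).map (Int.castRingHom ℝ) := by
    rw [Pex_eq_smul_map, ← map_cellIndicator (Int.castRingHom ℝ), Matrix.map_mul, Matrix.map_mul,
      Matrix.map_mul, transpose_map, sq, smul_mul_smul, Matrix.mul_smul, Matrix.smul_mul]
    norm_num
  have hint : 2 * (((cellIndicator ℤ f)ᵀ * (PexInt * PexInt) * cellIndicator ℤ f).det : ℝ) <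
      396683 ^ 2 * 10 ^ 30 * ∏ j, (#{x | f x = j} : ℝ) := by
    exact_mod_cast two_mul_det_cellIndicator_PexInt_sq_lt f hf
  rw [hcast, det_smul, ← RingHom.mapMatrix_apply, ← RingHom.map_det, Fintype.card_fin, eq_intCast]
  linarith

theorem det_partH_Pex_sq_lt (A : Fin 3 → Finset (Fin 6)) (hne : ∀ j, (A j).Nonempty)
    (hdisj : ∀ j k, j ≠ k → Disjoint (A j) (A k)) (hcov : ∀ x, ∃ j, x ∈ A j) :
    ((partH A)ᵀ * Pex ^ 2 * partH A).det < 0.396683 ^ 2 / 2 := by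
  obtain ⟨f, rfl⟩ := exists_eq_fibres A (fun j k => hdisj j k) hcov
  have hf : Function.Surjective f := fun j => by simpa [filter_nonempty_iff] using hne j
  have hpos : 0 < ∏ j, (#{x | f x = j} : ℝ) :=
    prod_pos fun j _ => by exact_mod_cast (hne j).card_pos
  rw [det_partH_fibres, div_lt_iff₀ hpos]
  exact det_cellIndicator_Pex_sq_lt f hf

/-- For the explicit six-state model with `T = P²`, every partition of the
six states into three nonempty cells satisfies `det Q_𝒜(T) < λ₁ λ₂ λ₃`, where
`λ₁ ≥ λ₂ ≥ ⋯ ≥ λ₆` are the eigenvalues of `T` with multiplicity (encoded by an antitone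
eigenvalue list factoring the characteristic polynomial); i.e. the supremum of the
partition-constrained determinants is strictly below the relaxed benchmark `𝔇ʳᵉˡ₃(T)`. -/
theorem explicit_global_gap
    (μ : Fin 6 → ℝ) (hμ : Antitone μ)
    (hchar : (Pex ^ 2).charpoly = ∏ i, (X - C (μ i))) :
    ∀ A : Fin 3 → Finset (Fin 6),
      (∀ j, (A j).Nonempty) →
      (∀ j k, j ≠ k → Disjoint (A j) (A k)) →
      (∀ x : Fin 6, ∃ j, x ∈ A j) →
      ((partH A)ᵀ * Pex ^ 2 * partH A).det < μ 0 * μ 1 * μ 2 := by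
  intro A hne hdisj hcov
  obtain ⟨hμ₀, hμ₁, hμ₂⟩ := Pex_sq_eigenvalues_ge hμ hchar
  calc _ < 0.396683 ^ 2 / 2 := det_partH_Pex_sq_lt A hne hdisj hcov
    _ = 1 * (1 / 2) * 0.396683 ^ 2 := by ring
    _ ≤ μ 0 * μ 1 * μ 2 := by gcongr
end
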